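/- Let D be a natural number with D ≥ 2, set m = (D+1)/3 (natural-number division) and c = (D:ℝ) + 2 − 3*m. Let x, y : Fin D → ℝ be monotone nondecreasing vectors with ∑ i, x i = ∑ i, y i and such that x is majorized by y, in the sense that for every k : Fin D, ∑ i ≤ k, x i ≥ ∑ i ≤ k, y i (partial sums of the smallest entries of x dominate those of y). Then 3 * (∑ i < m, x i) + c * x m ≥ 3 * (∑ i < m, y i) + c * y m. -/
import Mathlib


open Finset

/-- Schur-convexity statement of Appendix B: on nondecreasingly sorted vectors, the
linear functional `3·∑_{i<m} x_i + c·x_m` (with `m = ⌊(D+1)/3⌋`, `c = D+2−3m`) is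
larger on the more mixed vector: if `x ≺ y` (partial sums of the smallest entries of
`x` dominate those of `y`, with equal total sums), then the functional at `x` dominates
the functional at `y`. -/
theorem schur_convexity_majorization (D : ℕ) (hD : 2 ≤ D)
    (x y : Fin D → ℝ) (hx : Monotone x) (hy : Monotone y)
    (hsum : ∑ i, x i = ∑ i, y i)
    (hmaj : ∀ k : Fin D, ∑ i ∈ Finset.Iic k, x i ≥ ∑ i ∈ Finset.Iic k, y i) :
    3 * (∑ i ∈ Finset.univ.filter (fun i : Fin D => (i : ℕ) < (D + 1) / 3), x i)
      + ((D : ℝ) + 2 - 3 * (((D + 1) / 3 : ℕ) : ℝ)) * x ⟨(D + 1) / 3, by omega⟩ ≥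
    3 * (∑ i ∈ Finset.univ.filter (fun i : Fin D => (i : ℕ) < (D + 1) / 3), y i)
      + ((D : ℝ) + 2 - 3 * (((D + 1) / 3 : ℕ) : ℝ)) * y ⟨(D + 1) / 3, by omega⟩ := by
  set m : ℕ := (D + 1) / 3 with hm
  have hm1 : 1 ≤ m := by omega
  have hmD : m < D := by omega
  have hmD' : m - 1 < D := by omega
  set c : ℝ := (D : ℝ) + 2 - 3 * (m : ℝ) with hc
  have h3m : 3 * m ≤ D + 1 := by omega
  have h3m' : D - 1 ≤ 3 * m := by omega
  have hc0 : 0 ≤ c := by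
    have : (3 * m : ℝ) ≤ (D : ℝ) + 1 := by exact_mod_cast h3m
    simp only [hc]; linarith
  have hc3 : c ≤ 3 := by
    have : (D : ℝ) - 1 ≤ (3 * m : ℝ) := by
      have : ((D - 1 : ℕ) : ℝ) ≤ ((3 * m : ℕ) : ℝ) := by exact_mod_cast h3m'
      push_cast [Nat.cast_sub (by omega : 1 ≤ D)] at this
      linarith
    simp only [hc]; linarith
  -- identify the filter sum with the Iic sum
  have hfilt : Finset.univ.filter (fun i : Fin D => (i : ℕ) < m)
      = Finset.Iic (⟨m - 1, hmD'⟩ : Fin D) := by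
    ext i
    simp [Fin.le_def]
    omega
  have hins : (Finset.Iic (⟨m, hmD⟩ : Fin D))
      = insert (⟨m, hmD⟩ : Fin D) (Finset.Iic (⟨m - 1, hmD'⟩ : Fin D)) := by
    ext i
    simp [Fin.le_def, Fin.ext_iff]
    omega
  have hnot : (⟨m, hmD⟩ : Fin D) ∉ Finset.Iic (⟨m - 1, hmD'⟩ : Fin D) := by
    simp [Fin.le_def]; omega
  have hA := hmaj ⟨m - 1, hmD'⟩
  have hS := hmaj ⟨m, hmD⟩
  rw [hins, Finset.sum_insert hnot, Finset.sum_insert hnot] at hS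
  rw [hfilt]
  set Ax := ∑ i ∈ Finset.Iic (⟨m - 1, hmD'⟩ : Fin D), x i
  set Ay := ∑ i ∈ Finset.Iic (⟨m - 1, hmD'⟩ : Fin D), y i
  nlinarith [mul_nonneg (by linarith : (0:ℝ) ≤ 3 - c) (by linarith : (0:ℝ) ≤ Ax - Ay),
    mul_nonneg hc0 (by linarith : (0:ℝ) ≤ x ⟨m, hmD⟩ + Ax - (y ⟨m, hmD⟩ + Ay))]
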